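/- Let H be a bialgebra over a field of characteristic zero and φ : H → K[L] an algebra morphism into the polynomial algebra whose constant term (evaluation at L = 0) equals the counit ε. Let σ : H → K be the linear-in-L coefficient of φ. Then σ is an infinitesimal character (σ(ab) = ε(a)σ(b) + σ(a)ε(b)), and φ is a bialgebra morphism if and only if φ = exp_*(Lσ) = ε + Lσ + (L²/2) σ*σ + ⋯, where * is the convolution product (α*β = m∘(α⊗β)∘Δ) and K[L] is a bialgebra with Δ(L) = 1⊗L + L⊗1. -/

import Mathlib

open TensorProduct Polynomial

/-- The convolution product of two linear maps from a coalgebra to an algebra. -/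
noncomputable def convProd {K H A : Type*} [CommRing K] [AddCommGroup H] [Module K H]
    [Coalgebra K H] [CommRing A] [Algebra K A] (f g : H →ₗ[K] A) : H →ₗ[K] A :=
  LinearMap.mul' K A ∘ₗ TensorProduct.map f g ∘ₗ Coalgebra.comul

/-- Convolution powers of an `K`-valued linear map on a coalgebra; the zeroth power is
the counit (the unit of the convolution algebra). -/
noncomputable def convPow {K H : Type*} [CommRing K] [AddCommGroup H] [Module K H]
    [Coalgebra K H] (σ : H →ₗ[K] K) : ℕ → (H →ₗ[K] K)
  | 0 => Coalgebra.counit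
  | n + 1 => convProd σ (convPow σ n)

/-- The standard coproduct on `K[L]`, determined by `Δ L = L ⊗ 1 + 1 ⊗ L`. -/
noncomputable def polyComul (K : Type*) [CommRing K] :
    Polynomial K →ₐ[K] (Polynomial K ⊗[K] Polynomial K) :=
  Polynomial.aeval ((Polynomial.X : Polynomial K) ⊗ₜ[K] 1 + 1 ⊗ₜ[K] Polynomial.X)

/-! Write `φₙ` for the functional `h ↦ coeff n (φ h)`. Since `Δ(Lᵏ) = ∑ⱼ C(k, j) Lʲ ⊗ Lᵏ⁻ʲ`,
comparing the coefficients of `Lᵐ ⊗ Lⁿ` shows that `φ` is a coalgebra map iff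
`φₘ * φₙ = C(m + n, m) • φₘ₊ₙ` in the convolution algebra. As `φ₀ = ε` is the convolution unit,
over `ℚ` this relation holds iff `φₙ = σⁿ / n!` with `σ = φ₁`. That `σ` is an infinitesimal
character is read off from the coefficient of `L` in `φ(ab) = φ(a) φ(b)`. -/

open WithConv

section DividedPowerSequence

variable {R : Type*} [Ring R] [Algebra ℚ R]

theorem eq_inv_factorial_smul_pow_iff (f : ℕ → R) (hf0 : f 0 = 1) :
    (∀ m n, f m * f n = (m + n).choose m • f (m + n)) ↔
      ∀ n, f n = (n.factorial : ℚ)⁻¹ • f 1 ^ n := by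
  constructor
  · intro hmul n
    induction n with
    | zero => simp [hf0]
    | succ n ih =>
      have hstep : ((n + 1 : ℕ) : ℚ) • f (n + 1) = f 1 * f n := by
        rw [hmul 1 n, add_comm 1 n, Nat.choose_one_right, Nat.cast_smul_eq_nsmul]
      rw [ih, mul_smul_comm, ← pow_succ'] at hstep
      rw [← inv_smul_smul₀ (show ((n + 1 : ℕ) : ℚ) ≠ 0 by positivity) (f (n + 1)), hstep,
        smul_smul, Nat.factorial_succ, Nat.cast_mul, mul_inv]
  · intro hpow m n
    rw [hpow m, hpow n, hpow (m + n), smul_mul_smul_comm, ← pow_add, ← Nat.cast_smul_eq_nsmul ℚ,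
      smul_smul]
    congr 1
    rw [Nat.cast_choose ℚ (Nat.le_add_right m n), Nat.add_sub_cancel_left]
    have := (m + n).factorial_ne_zero
    field_simp

end DividedPowerSequence

section Convolution

variable {K H : Type*} [CommRing K] [AddCommGroup H] [Module K H] [Coalgebra K H]

theorem convProd_eq_convMul {A : Type*} [CommRing A] [Algebra K A] (f g : H →ₗ[K] A) :
    convProd f g = (toConv f * toConv g).ofConv :=
  rfl

theorem convPow_eq_pow (σ : H →ₗ[K] K) (n : ℕ) : convPow σ n = (toConv σ ^ n).ofConv := by
  induction n with
  | zero => ext; simp [convPow]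
  | succ n ih => rw [convPow, pow_succ', ih, convProd_eq_convMul]

end Convolution

section TensorCoeff

variable {K : Type*} [CommRing K]

variable (K) in
noncomputable def tensorCoeff (m n : ℕ) : K[X] ⊗[K] K[X] →ₗ[K] K :=
  LinearMap.mul' K K ∘ₗ TensorProduct.map (lcoeff K m) (lcoeff K n)

@[simp]
theorem tensorCoeff_tmul (m n : ℕ) (p q : K[X]) :
    tensorCoeff K m n (p ⊗ₜ q) = p.coeff m * q.coeff n := by
  simp [tensorCoeff]

theorem tensorCoeff_injective {x y : K[X] ⊗[K] K[X]}
    (h : ∀ m n, tensorCoeff K m n x = tensorCoeff K m n y) : x = y := by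
  let b := (basisMonomials K).tensorProduct (basisMonomials K)
  have hrepr (z : K[X] ⊗[K] K[X]) (m n : ℕ) : b.repr z (m, n) = tensorCoeff K m n z := by
    induction z using TensorProduct.induction_on with
    | zero => simp
    | tmul p q =>
      simp only [b, Module.Basis.tensorProduct_repr_tmul_apply, smul_eq_mul, mul_comm]
      rfl
    | add u v hu hv => simp [hu, hv]
  exact b.ext_elem fun ⟨m, n⟩ ↦ by rw [hrepr, hrepr, h]

theorem polyComul_X_pow (k : ℕ) :
    polyComul K (X ^ k) =
      ∑ j ∈ Finset.range (k + 1), k.choose j • (((X : K[X]) ^ j) ⊗ₜ[K] ((X : K[X]) ^ (k - j))) := by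
  rw [polyComul, map_pow, aeval_X, add_pow]
  refine Finset.sum_congr rfl fun j _ ↦ ?_
  simp [Algebra.TensorProduct.tmul_pow, nsmul_eq_mul, mul_comm]

theorem tensorCoeff_polyComul (m n : ℕ) (p : K[X]) :
    tensorCoeff K m n (polyComul K p) = (m + n).choose m • p.coeff (m + n) := by
  induction p using Polynomial.induction_on' with
  | add p q hp hq => simp only [map_add, coeff_add, smul_add, hp, hq]
  | monomial k a =>
    rw [← smul_X_eq_monomial, map_smul, map_smul, polyComul_X_pow, map_sum]
    simp only [map_nsmul, tensorCoeff_tmul, coeff_X_pow, coeff_smul]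
    rw [Finset.sum_eq_single m (fun j _ hj ↦ by simp [Ne.symm hj])
      (fun hm ↦ by simp [Nat.choose_eq_zero_of_lt (by simpa using hm)])]
    by_cases hk : k = m + n
    · subst hk
      simp [mul_comm]
    · rcases lt_or_ge k m with hkm | hmk
      · simp [Nat.choose_eq_zero_of_lt hkm, Ne.symm hk]
      · have : n ≠ k - m := by omega
        simp [this, Ne.symm hk]

end TensorCoeff

section CoefficientFunctionals

variable {K H : Type*} [CommRing K] [AddCommGroup H] [Module K H]

noncomputable def coeffConv (φ : H →ₗ[K] K[X]) (n : ℕ) : WithConv (H →ₗ[K] K) :=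
  toConv (lcoeff K n ∘ₗ φ)

@[simp]
theorem coeffConv_apply (φ : H →ₗ[K] K[X]) (n : ℕ) (h : H) : coeffConv φ n h = (φ h).coeff n :=
  rfl

variable [Coalgebra K H]

theorem tensorCoeff_map_comul (φ : H →ₗ[K] K[X]) (m n : ℕ) (h : H) :
    tensorCoeff K m n (TensorProduct.map φ φ (Coalgebra.comul h)) =
      (coeffConv φ m * coeffConv φ n) h := by
  rw [LinearMap.convMul_apply, coeffConv, coeffConv, ofConv_toConv, ofConv_toConv,
    TensorProduct.map_comp]
  rfl

theorem polyComul_comp_eq_map_comul_iff (φ : H →ₗ[K] K[X]) :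
    (∀ h, polyComul K (φ h) = TensorProduct.map φ φ (Coalgebra.comul h)) ↔
      ∀ m n, coeffConv φ m * coeffConv φ n = (m + n).choose m • coeffConv φ (m + n) := by
  constructor
  · intro hφ m n
    refine WithConv.ext (LinearMap.ext fun h ↦ ?_)
    rw [← tensorCoeff_map_comul, ← hφ h, tensorCoeff_polyComul]
    simp only [ofConv_smul, LinearMap.smul_apply, coeffConv_apply]
  · intro hφ h
    refine tensorCoeff_injective fun m n ↦ ?_
    rw [tensorCoeff_polyComul, tensorCoeff_map_comul, hφ]
    simp only [ofConv_smul, LinearMap.smul_apply, coeffConv_apply]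

end CoefficientFunctionals

/-- Let `φ : H → K[L]` be an algebra morphism from a bialgebra whose constant term is the
counit, and let `σ` be its linear-in-`L` coefficient.  Then `σ` is an infinitesimal
character, and `φ` is a bialgebra morphism if and only if `φ = exp_*(Lσ)`, i.e.
`coeff n (φ h) = σ^{*n}(h)/n!` for all `h` and `n`. -/
theorem algHom_to_poly_exp_character {K H : Type*} [CommRing K] [Algebra ℚ K]
    [Ring H] [Bialgebra K H] (φ : H →ₐ[K] Polynomial K)
    (hconst : ∀ h : H, (φ h).coeff 0 = Coalgebra.counit (R := K) h) :
    (∀ a b : H, (φ (a * b)).coeff 1 =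
        Coalgebra.counit (R := K) a * (φ b).coeff 1 +
          (φ a).coeff 1 * Coalgebra.counit (R := K) b) ∧
    ((∀ h : H, polyComul K (φ h) =
        TensorProduct.map φ.toLinearMap φ.toLinearMap (Coalgebra.comul (R := K) h)) ↔
      (∀ (h : H) (n : ℕ), (φ h).coeff n =
        (n.factorial : ℚ)⁻¹ •
          convPow ((Polynomial.lcoeff K 1) ∘ₗ φ.toLinearMap) n h)) := by
  refine ⟨fun a b ↦ by simp [mul_coeff_one, hconst], ?_⟩
  have hunit : coeffConv φ.toLinearMap 0 = 1 := by
    ext h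
    simp [hconst]
  have hbialg := polyComul_comp_eq_map_comul_iff φ.toLinearMap
  simp only [AlgHom.toLinearMap_apply] at hbialg
  rw [hbialg, eq_inv_factorial_smul_pow_iff _ hunit, forall_comm]
  simp only [convPow_eq_pow, WithConv.ext_iff, LinearMap.ext_iff, ofConv_smul,
    LinearMap.smul_apply, coeffConv_apply]
  rfl
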